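/- Let Ω = ((Ψ_n, M_n, P_n))_{n∈ℕ} be an admissible module-sequence such that every M_n and every P_n commutes with all translations: M_n T_t f = T_t M_n f and P_n T_t f = T_t P_n f for all f ∈ L²(ℝ^d), t ∈ ℝ^d, n ≥ 1. Then the features of the n-th layer satisfy, for all f ∈ L²(ℝ^d), t ∈ ℝ^d, n ≥ 1, and all paths q ∈ Λ₁^n: (U[q](T_t f)) ∗ χ_n = T_{t/(S₁⋯S_n)} ((U[q]f) ∗ χ_n); i.e. Φ_Ω^n(T_t f) = T_{t/(S₁⋯S_n)} Φ_Ω^n(f) elementwise. -/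

import Mathlib

open MeasureTheory
open scoped ENNReal FourierTransform

noncomputable section

/-- ℝ^d as a Euclidean space. -/
abbrev Ed (d : ℕ) : Type := EuclideanSpace ℝ (Fin d)

/-- Convolution (f ∗ g)(x) = ∫ f(y) g(x − y) dy. -/
def convol {d : ℕ} (f g : Ed d → ℂ) : Ed d → ℂ := fun x => ∫ y, f y * g (x - y)

/-- One network layer: U[λ]f = S^{d/2} · P(M(f ∗ g))(S·). -/
def layerU {d : ℕ} (S : ℝ) (P M : (Ed d → ℂ) → (Ed d → ℂ)) (g : Ed d → ℂ)
    (f : Ed d → ℂ) : Ed d → ℂ :=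
  fun x => ((S ^ ((d : ℝ) / 2) : ℝ) : ℂ) * P (M (convol f g)) (S • x)

/-- Iterated layer operators along a path q = (λ₁, …, λ_n):
U[q]f = U_n[λ_n] ⋯ U₁[λ₁] f. -/
def pathU {d : ℕ} (Λ : ℕ → Type) (g : (n : ℕ) → Λ n → Ed d → ℂ)
    (M P : ℕ → (Ed d → ℂ) → (Ed d → ℂ)) (S : ℕ → ℝ) (n : ℕ)
    (q : (k : Fin n) → Λ k.1) (f : Ed d → ℂ) : Ed d → ℂ :=
  Fin.foldl n (fun h k => layerU (S k.1) (P k.1) (M k.1) (g k.1 (q k)) h) f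

/-! Every layer intertwines translations: convolution commutes with translations, `M` and `P`
do by hypothesis, and the dilation `x ↦ S • x` turns a shift by `u` into a shift by `S⁻¹ • u`.
Along a path these factors accumulate to `(S₀ ⋯ S_{n-1})⁻¹`, and the final convolution with `χ n`
commutes with translations again. The commutation hypotheses only apply to `L²` functions, so one
also carries along that every `U[q] f` stays in `L²`; for `f ∗ g_λ` this is the upper frame bound. -/

theorem MeasureTheory.MemLp.comp_smul {E F : Type*} [NormedAddCommGroup E] [NormedSpace ℝ E]
    [MeasurableSpace E] [BorelSpace E] [FiniteDimensional ℝ E] [NormedAddCommGroup F]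
    {μ : Measure E} [μ.IsAddHaarMeasure] {p : ℝ≥0∞} {φ : E → F} (hφ : MemLp φ p μ)
    {r : ℝ} (hr : r ≠ 0) : MemLp (fun x => φ (r • x)) p μ := by
  have hmap : MemLp φ p (μ.map (r • ·)) := by
    rw [Measure.map_addHaar_smul μ hr]
    exact hφ.smul_measure ENNReal.ofReal_ne_top
  exact hmap.comp_of_map (continuous_const_smul r).aemeasurable

section Convolution

variable {d : ℕ}

theorem convol_comp_sub (f g : Ed d → ℂ) (t : Ed d) :
    convol (fun x => f (x - t)) g = fun x => convol f g (x - t) := by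
  funext x
  rw [convol, convol, ← integral_sub_right_eq_self (fun y => f y * g (x - t - y)) t]
  simp only [sub_sub_sub_cancel_right]

theorem MeasureTheory.AEStronglyMeasurable.convol {f g : Ed d → ℂ} (hf : AEStronglyMeasurable f volume)
    (hg : AEStronglyMeasurable g volume) : AEStronglyMeasurable (convol f g) volume :=
  (hf.comp_snd.mul (hg.comp_quasiMeasurePreserving
    (quasiMeasurePreserving_sub volume volume))).integral_prod_right'

theorem memLp_convol_of_frame_upper_bound {ι : Type*} {χ : Ed d → ℂ} {G : ι → Ed d → ℂ}
    {B : ℝ} {f : Ed d → ℂ} (hf : MemLp f 2 volume) (i : ι)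
    (hG : AEStronglyMeasurable (G i) volume)
    (hupper : eLpNorm (convol f χ) 2 volume ^ 2 + ∑' j, eLpNorm (convol f (G j)) 2 volume ^ 2 ≤
      ENNReal.ofReal B * eLpNorm f 2 volume ^ 2) :
    MemLp (convol f (G i)) 2 volume := by
  refine ⟨hf.1.convol hG, ?_⟩
  have hsq : eLpNorm (convol f (G i)) 2 volume ^ 2 < ∞ :=
    calc eLpNorm (convol f (G i)) 2 volume ^ 2
        ≤ ∑' j, eLpNorm (convol f (G j)) 2 volume ^ 2 := ENNReal.le_tsum i
      _ ≤ ENNReal.ofReal B * eLpNorm f 2 volume ^ 2 := le_add_self.trans hupper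
      _ < ∞ := ENNReal.mul_lt_top ENNReal.ofReal_lt_top (ENNReal.pow_lt_top hf.2)
  simpa using hsq

end Convolution

section Layers

variable {d : ℕ}

theorem memLp_layerU {S : ℝ} (hS : S ≠ 0) {P M : (Ed d → ℂ) → Ed d → ℂ} {g h : Ed d → ℂ}
    (hP : MemLp (P (M (convol h g))) 2 volume) : MemLp (layerU S P M g h) 2 volume :=
  (hP.comp_smul hS).const_mul _

theorem layerU_comp_sub {S : ℝ} (hS : S ≠ 0) {P M : (Ed d → ℂ) → Ed d → ℂ} {g h : Ed d → ℂ}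
    (u : Ed d)
    (hM : M (fun x => convol h g (x - u)) = fun x => M (convol h g) (x - u))
    (hP : P (fun x => M (convol h g) (x - u)) = fun x => P (M (convol h g)) (x - u)) :
    layerU S P M g (fun x => h (x - u)) = fun x => layerU S P M g h (x - S⁻¹ • u) := by
  funext x
  simp only [layerU, convol_comp_sub, hM, hP, smul_sub, smul_inv_smul₀ hS]

theorem pathU_succ {Λ : ℕ → Type} (g : (n : ℕ) → Λ n → Ed d → ℂ)
    (M P : ℕ → (Ed d → ℂ) → Ed d → ℂ) (S : ℕ → ℝ) (n : ℕ)
    (q : (k : Fin (n + 1)) → Λ k.1) (f : Ed d → ℂ) :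
    pathU Λ g M P S (n + 1) q f =
      layerU (S n) (P n) (M n) (g n (q (Fin.last n)))
        (pathU Λ g M P S n (fun k => q k.castSucc) f) := by
  rw [pathU, Fin.foldl_succ_last]
  rfl

end Layers

section Paths

variable {d : ℕ} {Λ : ℕ → Type} {g : (n : ℕ) → Λ n → Ed d → ℂ}
  {M P : ℕ → (Ed d → ℂ) → Ed d → ℂ} {S : ℕ → ℝ}
  (hS : ∀ n, S n ≠ 0)
  (hconv : ∀ n lam (f : Ed d → ℂ), MemLp f 2 volume → MemLp (convol f (g n lam)) 2 volume)
  (hMmem : ∀ n (f : Ed d → ℂ), MemLp f 2 volume → MemLp (M n f) 2 volume)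
  (hPmem : ∀ n (f : Ed d → ℂ), MemLp f 2 volume → MemLp (P n f) 2 volume)
include hS hconv hMmem hPmem

theorem memLp_pathU {f : Ed d → ℂ} (hf : MemLp f 2 volume) :
    ∀ n q, MemLp (pathU Λ g M P S n q f) 2 volume := by
  intro n
  induction n with
  | zero => exact fun _ => hf
  | succ n ih =>
    intro q
    rw [pathU_succ]
    exact memLp_layerU (hS n) (hPmem n _ (hMmem n _ (hconv n _ _ (ih _))))

theorem pathU_comp_sub
    (hMcomm : ∀ n (f : Ed d → ℂ), MemLp f 2 volume → ∀ t : Ed d,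
      M n (fun x => f (x - t)) = fun x => M n f (x - t))
    (hPcomm : ∀ n (f : Ed d → ℂ), MemLp f 2 volume → ∀ t : Ed d,
      P n (fun x => f (x - t)) = fun x => P n f (x - t))
    {f : Ed d → ℂ} (hf : MemLp f 2 volume) (t : Ed d) :
    ∀ n q, pathU Λ g M P S n q (fun x => f (x - t)) =
      fun x => pathU Λ g M P S n q f (x - (∏ k ∈ Finset.range n, S k)⁻¹ • t) := by
  intro n
  induction n with
  | zero => intro q; simp [pathU]
  | succ n ih =>
    intro q
    have hconv_n := hconv n (q (Fin.last n)) _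
      (memLp_pathU hS hconv hMmem hPmem hf n fun k => q k.castSucc)
    rw [pathU_succ, pathU_succ, ih, layerU_comp_sub (hS n) _ (hMcomm n _ hconv_n _)
      (hPcomm n _ (hMmem n _ hconv_n) _), smul_smul, Finset.prod_range_succ, mul_inv_rev]

end Paths

theorem stmt_8_general {d : ℕ}
    {Λ : ℕ → Type}
    (g : (n : ℕ) → Λ n → Ed d → ℂ) (χ : ℕ → Ed d → ℂ)
    (A B S : ℕ → ℝ)
    (M P : ℕ → (Ed d → ℂ) → (Ed d → ℂ))
    (hg2 : ∀ n lam, MemLp (g n lam) 2 volume)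
    (hS : ∀ n, 1 ≤ S n)
    (hframe : ∀ (n : ℕ) (f : Ed d → ℂ), MemLp f 2 volume →
      ENNReal.ofReal (A n) * eLpNorm f 2 volume ^ 2 ≤
          eLpNorm (convol f (χ n)) 2 volume ^ 2 +
            ∑' lam : Λ n, eLpNorm (convol f (g n lam)) 2 volume ^ 2 ∧
        eLpNorm (convol f (χ n)) 2 volume ^ 2 +
            ∑' lam : Λ n, eLpNorm (convol f (g n lam)) 2 volume ^ 2 ≤
          ENNReal.ofReal (B n) * eLpNorm f 2 volume ^ 2)
    (hMmem : ∀ (n : ℕ) (f : Ed d → ℂ), MemLp f 2 volume → MemLp (M n f) 2 volume)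
    (hPmem : ∀ (n : ℕ) (f : Ed d → ℂ), MemLp f 2 volume → MemLp (P n f) 2 volume)
    (hMcomm : ∀ (n : ℕ) (f : Ed d → ℂ), MemLp f 2 volume → ∀ t : Ed d,
      M n (fun x => f (x - t)) = fun x => M n f (x - t))
    (hPcomm : ∀ (n : ℕ) (f : Ed d → ℂ), MemLp f 2 volume → ∀ t : Ed d,
      P n (fun x => f (x - t)) = fun x => P n f (x - t)) :
    ∀ f : Ed d → ℂ, MemLp f 2 volume → ∀ t : Ed d, ∀ n : ℕ, 1 ≤ n →
      ∀ q : (k : Fin n) → Λ k.1,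
        convol (pathU Λ g M P S n q (fun x => f (x - t))) (χ n) =
          fun x => convol (pathU Λ g M P S n q f) (χ n)
            (x - (∏ k ∈ Finset.range n, S k)⁻¹ • t) := by
  intro f hf t n _ q
  have hS0 : ∀ n, S n ≠ 0 := fun n => (one_pos.trans_le (hS n)).ne'
  have hconv : ∀ n lam (h : Ed d → ℂ), MemLp h 2 volume → MemLp (convol h (g n lam)) 2 volume :=
    fun n lam h hh => memLp_convol_of_frame_upper_bound hh lam (hg2 n lam).1 (hframe n h hh).2
  rw [pathU_comp_sub hS0 hconv hMmem hPmem hMcomm hPcomm hf, convol_comp_sub]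

/-- Translation covariance of the n-th layer features of an admissible module-sequence:
Φ^n(T_t f) = T_{t/(S₁⋯S_n)} Φ^n(f) elementwise. -/
theorem stmt_8 {d : ℕ}
    {Λ : ℕ → Type} [∀ n, Countable (Λ n)]
    (g : (n : ℕ) → Λ n → Ed d → ℂ) (χ : ℕ → Ed d → ℂ)
    (A B L R S : ℕ → ℝ)
    (M P : ℕ → (Ed d → ℂ) → (Ed d → ℂ))
    (hg1 : ∀ n lam, MemLp (g n lam) 1 volume) (hg2 : ∀ n lam, MemLp (g n lam) 2 volume)
    (hχ1 : ∀ n, MemLp (χ n) 1 volume) (hχ2 : ∀ n, MemLp (χ n) 2 volume)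
    (hA : ∀ n, 0 < A n) (hB : ∀ n, 0 < B n) (hL : ∀ n, 0 ≤ L n) (hR : ∀ n, 0 ≤ R n)
    (hS : ∀ n, 1 ≤ S n)
    (hframe : ∀ (n : ℕ) (f : Ed d → ℂ), MemLp f 2 volume →
      ENNReal.ofReal (A n) * eLpNorm f 2 volume ^ 2 ≤
          eLpNorm (convol f (χ n)) 2 volume ^ 2 +
            ∑' lam : Λ n, eLpNorm (convol f (g n lam)) 2 volume ^ 2 ∧
        eLpNorm (convol f (χ n)) 2 volume ^ 2 +
            ∑' lam : Λ n, eLpNorm (convol f (g n lam)) 2 volume ^ 2 ≤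
          ENNReal.ofReal (B n) * eLpNorm f 2 volume ^ 2)
    (hMmem : ∀ (n : ℕ) (f : Ed d → ℂ), MemLp f 2 volume → MemLp (M n f) 2 volume)
    (hPmem : ∀ (n : ℕ) (f : Ed d → ℂ), MemLp f 2 volume → MemLp (P n f) 2 volume)
    (hMlip : ∀ (n : ℕ) (f h : Ed d → ℂ), MemLp f 2 volume → MemLp h 2 volume →
      eLpNorm (M n f - M n h) 2 volume ≤ ENNReal.ofReal (L n) * eLpNorm (f - h) 2 volume)
    (hPlip : ∀ (n : ℕ) (f h : Ed d → ℂ), MemLp f 2 volume → MemLp h 2 volume →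
      eLpNorm (P n f - P n h) 2 volume ≤ ENNReal.ofReal (R n) * eLpNorm (f - h) 2 volume)
    (hM0 : ∀ n, M n 0 = 0) (hP0 : ∀ n, P n 0 = 0)
    (hadm : ∀ n, max (B n) (B n * L n ^ 2 * R n ^ 2) ≤ 1)
    (hMcomm : ∀ (n : ℕ) (f : Ed d → ℂ), MemLp f 2 volume → ∀ t : Ed d,
      M n (fun x => f (x - t)) = fun x => M n f (x - t))
    (hPcomm : ∀ (n : ℕ) (f : Ed d → ℂ), MemLp f 2 volume → ∀ t : Ed d,
      P n (fun x => f (x - t)) = fun x => P n f (x - t)) :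
    ∀ f : Ed d → ℂ, MemLp f 2 volume → ∀ t : Ed d, ∀ n : ℕ, 1 ≤ n →
      ∀ q : (k : Fin n) → Λ k.1,
        convol (pathU Λ g M P S n q (fun x => f (x - t))) (χ n) =
          fun x => convol (pathU Λ g M P S n q f) (χ n)
            (x - (∏ k ∈ Finset.range n, S k)⁻¹ • t) :=
  stmt_8_general g χ A B S M P hg2 hS hframe hMmem hPmem hMcomm hPcomm
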